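/- arXiv:1406.7651 — 2 statements merged into one kernel-verified Lean document; each statement's English description precedes it below -/
import Mathlib

section
/- Let p be a prime, n ≥ 3, F = GF(p), V = F^{n+1} with basis v₀, v₁, ..., v_n, and W = Λ²V. Let f : V → W be the linear map whose matrix, with respect to the basis v₀,...,v_n of V and the basis of W ordered as v₀∧v₁, ..., v₀∧v_n, followed by the v_i∧v_j with 1 ≤ i < j ≤ n, is the block matrix [[b, c], [A, 0]] with b a 1×n row vector, c a nonzero 1×C(n,2) row vector, and A an invertible n×n matrix. Then span(v₀) = {x ∈ V : x ∧ w ∈ f(V) for all w ∈ V}. -/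
/-- The index type for the standard basis of the exterior square `Λ²V` of
`V = F^(n+1)` with basis `v₀, v₁, …, v_n` (here `V = (Fin 1 ⊕ Fin n) → F`, with
`v₀` indexed by `Sum.inl 0` and `v_{j+1}` by `Sum.inr j`): `Sum.inl j` indexes
`v₀ ∧ v_{j+1}` (the first `n` basis vectors) and `Sum.inr ⟨(i,j), _⟩` indexes
`v_{i+1} ∧ v_{j+1}` for `i < j` (the remaining `C(n,2)` basis vectors), in the
ordering prescribed by the paper. -/
abbrev WIdx (n : ℕ) : Type := Fin n ⊕ {q : Fin n × Fin n // q.1 < q.2}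

/-- The wedge product `V × V → Λ²V` of `V = F^(n+1)`, written in the coordinates of the
standard bases described in `WIdx`. -/
def wedge {F : Type*} [CommRing F] {n : ℕ} (x y : (Fin 1 ⊕ Fin n) → F) :
    WIdx n → F :=
  Sum.elim
    (fun j => x (Sum.inl 0) * y (Sum.inr j) - x (Sum.inr j) * y (Sum.inl 0))
    (fun q => x (Sum.inr q.1.1) * y (Sum.inr q.1.2) - x (Sum.inr q.1.2) * y (Sum.inr q.1.1))

/-!
Since `A` is invertible, `f(V)` consists of all vectors whose `Λ²⟨v₁, …, v_n⟩`-component is a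
multiple of `c`. Write `x = x₀ v₀ + x'`. If `x' = 0`, every `x ∧ w` has zero such component. If
`x'` has a nonzero coordinate `x_i`, pick `j ≠ k` different from `i`:
`x ∧ v_j = a c` has coordinate `±x_i ≠ 0` at `v_i ∧ v_j`, so `a ≠ 0`, and coordinate `0` at
`v_i ∧ v_k`, so `c` vanishes there; but `x ∧ v_k` has coordinate `±x_i ≠ 0` at `v_i ∧ v_k`.
-/

open Matrix

section BlockRange

variable {R : Type*} [CommRing R] {l m o : Type*} [Fintype l] [Fintype m] [DecidableEq m]

theorem mem_range_vecMulLinear_fromBlocks_zero (b : Matrix l m R) (c : Matrix l o R)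
    {A : Matrix m m R} (hA : IsUnit A) (y : m ⊕ o → R) :
    y ∈ LinearMap.range (fromBlocks b c A 0).vecMulLinear ↔
      y ∘ Sum.inr ∈ LinearMap.range c.vecMulLinear := by
  simp only [LinearMap.mem_range, vecMulLinear_apply]
  constructor
  · rintro ⟨x, rfl⟩
    exact ⟨x ∘ Sum.inl, by simp [vecMul_fromBlocks]⟩
  · rintro ⟨s, hs⟩
    have hAinv : A⁻¹ * A = 1 := nonsing_inv_mul A ((isUnit_iff_isUnit_det A).mp hA)
    refine ⟨Sum.elim s ((y ∘ Sum.inl - s ᵥ* b) ᵥ* A⁻¹), ?_⟩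
    ext (i | i)
    · simp [vecMul_fromBlocks, vecMul_vecMul, hAinv]
    · simpa [vecMul_fromBlocks] using congrFun hs i

end BlockRange

theorem mem_span_single_one_iff {R ι : Type*} [Semiring R] [DecidableEq ι] {i : ι} {x : ι → R} :
    x ∈ R ∙ Pi.single i 1 ↔ ∀ j ≠ i, x j = 0 := by
  rw [Submodule.mem_span_singleton]
  constructor
  · rintro ⟨a, rfl⟩ j hj
    simp [hj]
  · intro hx
    refine ⟨x i, funext fun j => ?_⟩
    by_cases hj : j = i
    · simp [hj]
    · simp [hj, hx j hj]

theorem mem_span_single_inl_iff {R κ ι : Type*} [Semiring R] [Subsingleton κ] [DecidableEq κ]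
    [DecidableEq ι] {k : κ} {x : κ ⊕ ι → R} :
    x ∈ R ∙ Pi.single (Sum.inl k) 1 ↔ x ∘ Sum.inr = 0 := by
  simp [mem_span_single_one_iff, funext_iff, Sum.forall, Subsingleton.elim _ k]

section WedgeUpper

variable {K ι : Type*} [LinearOrder ι]

def wedgeUpper [Mul K] [Sub K] (x y : ι → K) : {q : ι × ι // q.1 < q.2} → K :=
  fun q => x q.1.1 * y q.1.2 - x q.1.2 * y q.1.1

def sortedPair {i j : ι} (h : i ≠ j) : {q : ι × ι // q.1 < q.2} :=
  ⟨(min i j, max i j), min_lt_max.2 h⟩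

variable [Ring K]

@[simp]
theorem wedgeUpper_zero_left (y : ι → K) : wedgeUpper 0 y = 0 := by
  ext q
  simp [wedgeUpper]

theorem wedgeUpper_single_sortedPair_ne_zero {x : ι → K} {i j : ι} (hij : i ≠ j) (hx : x i ≠ 0) :
    wedgeUpper x (Pi.single j 1) (sortedPair hij) ≠ 0 := by
  rcases hij.lt_or_gt with h | h
  · simpa [wedgeUpper, sortedPair, h.le, h.ne, h.ne'] using hx
  · simpa [wedgeUpper, sortedPair, h.le, h.ne, h.ne'] using hx

theorem wedgeUpper_single_sortedPair_eq_zero (x : ι → K) {i j k : ι} (hik : i ≠ k) (hji : j ≠ i)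
    (hjk : j ≠ k) : wedgeUpper x (Pi.single j 1) (sortedPair hik) = 0 := by
  rcases le_total i k with h | h <;>
    simp [wedgeUpper, sortedPair, h, hji.symm, hjk.symm]

end WedgeUpper

theorem eq_zero_of_forall_wedgeUpper_single_mem_span {K ι : Type*} [Field K] [LinearOrder ι]
    [Fintype ι] (hι : 3 ≤ Fintype.card ι) (c : {q : ι × ι // q.1 < q.2} → K) {x : ι → K}
    (hx : ∀ j, wedgeUpper x (Pi.single j 1) ∈ K ∙ c) : x = 0 := by
  funext i
  by_contra hxi
  have hcard : 1 < ({i}ᶜ : Finset ι).card := by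
    rw [Finset.card_compl, Finset.card_singleton]
    omega
  obtain ⟨j, hj, k, hk, hjk⟩ := Finset.one_lt_card.mp hcard
  rw [Finset.mem_compl, Finset.mem_singleton] at hj hk
  obtain ⟨a, ha⟩ := Submodule.mem_span_singleton.mp (hx j)
  obtain ⟨b, hb⟩ := Submodule.mem_span_singleton.mp (hx k)
  have hik : i ≠ k := Ne.symm hk
  have ha_ne : a ≠ 0 := by
    rintro rfl
    exact wedgeUpper_single_sortedPair_ne_zero (Ne.symm hj) hxi (by simp [← ha])
  have hc : c (sortedPair hik) = 0 := by
    simpa [ha_ne] using (congrFun ha (sortedPair hik)).trans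
      (wedgeUpper_single_sortedPair_eq_zero x hik hj hjk)
  exact wedgeUpper_single_sortedPair_ne_zero hik hxi (by simp [← hb, hc])

theorem wedge_comp_inr {F : Type*} [CommRing F] {n : ℕ} (x y : (Fin 1 ⊕ Fin n) → F) :
    wedge x y ∘ Sum.inr = wedgeUpper (x ∘ Sum.inr) (y ∘ Sum.inr) := rfl

theorem stmt8_general (p n : ℕ) [Fact p.Prime] (hn : 3 ≤ n)
    (b : Matrix (Fin 1) (Fin n) (ZMod p))
    (c : Matrix (Fin 1) {q : Fin n × Fin n // q.1 < q.2} (ZMod p))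
    (A : Matrix (Fin n) (Fin n) (ZMod p)) (hA : IsUnit A)
    (f : ((Fin 1 ⊕ Fin n) → ZMod p) →ₗ[ZMod p] (WIdx n → ZMod p))
    (hf : f = (Matrix.fromBlocks b c A 0).vecMulLinear)
    (v₀ : (Fin 1 ⊕ Fin n) → ZMod p) (hv₀ : v₀ = Pi.single (Sum.inl 0) 1) :
    (Submodule.span (ZMod p) {v₀} : Set ((Fin 1 ⊕ Fin n) → ZMod p)) =
      {x | ∀ w : (Fin 1 ⊕ Fin n) → ZMod p, wedge x w ∈ LinearMap.range f} := by
  subst hf hv₀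
  have hrange : LinearMap.range c.vecMulLinear = ZMod p ∙ c 0 := by
    rw [range_vecMulLinear, Set.range_unique]
    rfl
  ext x
  simp only [SetLike.mem_coe, mem_span_single_inl_iff, Set.mem_ofPred_eq,
    mem_range_vecMulLinear_fromBlocks_zero b c hA, wedge_comp_inr, hrange]
  constructor
  · intro hx w
    rw [hx, wedgeUpper_zero_left]
    exact zero_mem _
  · intro hx
    refine eq_zero_of_forall_wedgeUpper_single_mem_span (by simpa using hn) (c 0) fun j => ?_
    simpa only [Sum.elim_comp_inr] using hx (Sum.elim 0 (Pi.single j 1))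

/-- Let `p` be a prime, `n ≥ 3`, `F = GF(p)`, `V = F^(n+1)` with basis
`v₀, …, v_n` and `W = Λ²V`. Let `f : V → W` be the linear map whose matrix with respect to
these bases is the block matrix `[[b, c], [A, 0]]` with `b` a `1 × n` row vector, `c` a
nonzero `1 × C(n,2)` row vector and `A` an invertible `n × n` matrix. Then
`span(v₀) = {x ∈ V : x ∧ w ∈ f(V) for all w ∈ V}`. -/
theorem stmt8 (p n : ℕ) [Fact p.Prime] (hn : 3 ≤ n)
    (b : Matrix (Fin 1) (Fin n) (ZMod p))
    (c : Matrix (Fin 1) {q : Fin n × Fin n // q.1 < q.2} (ZMod p)) (hc : c ≠ 0)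
    (A : Matrix (Fin n) (Fin n) (ZMod p)) (hA : IsUnit A)
    (f : ((Fin 1 ⊕ Fin n) → ZMod p) →ₗ[ZMod p] (WIdx n → ZMod p))
    (hf : f = (Matrix.fromBlocks b c A 0).vecMulLinear)
    (v₀ : (Fin 1 ⊕ Fin n) → ZMod p) (hv₀ : v₀ = Pi.single (Sum.inl 0) 1) :
    (Submodule.span (ZMod p) {v₀} : Set ((Fin 1 ⊕ Fin n) → ZMod p)) =
      {x | ∀ w : (Fin 1 ⊕ Fin n) → ZMod p, wedge x w ∈ LinearMap.range f} :=
  stmt8_general p n hn b c A hA f hf v₀ hv₀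
end

section
/- Let p be a prime, n ≥ 1, F = GF(p), α a primitive element of GF(p^n), m its minimal polynomial over F, and A the n×n companion matrix of m. If γ ∈ F^* and Δ ∈ GL(n, F) satisfy Δ A Δ^{-1} = γ A, then γ = 1. -/
/-!
Conjugating `A` by `Δ` shows that `γA` is again annihilated by `m`, i.e. `m ∣ m(γX)`; evaluating
at `α` makes `γα` a root of `m`, hence a Galois conjugate of `α`. Every automorphism of
`GF(pⁿ)` is a Frobenius power, so `γα = α^(p^j)` with `j < n`, i.e. `γ = α^(p^j - 1)`. Since
`γ^(p-1) = 1` and `α` has order `pⁿ - 1`, this forces `pⁿ - 1 ∣ (p^j - 1)(p - 1)`, which is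
impossible for `0 < j < n` by size; so `j = 0` and `γ = 1`.
-/

open Polynomial

theorem Nat.pow_sub_one_mul_sub_one_lt {q j n : ℕ} (hq : 2 ≤ q) (hjn : j < n) :
    (q ^ j - 1) * (q - 1) < q ^ n - 1 := by
  have hqj : 1 ≤ q ^ j := Nat.one_le_pow _ _ (by omega)
  have hqn : q ^ (j + 1) ≤ q ^ n := Nat.pow_le_pow_right (by omega) hjn
  calc (q ^ j - 1) * (q - 1) < q ^ j * (q - 1) :=
        Nat.mul_lt_mul_of_pos_right (by omega) (by omega)
    _ = q ^ (j + 1) - q ^ j := by rw [Nat.mul_sub_one, pow_succ]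
    _ ≤ q ^ n - 1 := by omega

namespace Polynomial

theorem aeval_units_conj {R S : Type*} [CommSemiring R] [Ring S] [Algebra R S]
    (u : Sˣ) (x : S) (f : R[X]) :
    aeval ((u : S) * x * (↑u⁻¹ : S)) f = (u : S) * aeval x f * (↑u⁻¹ : S) := by
  simpa [ConjAct.units_smul_def] using aeval_smul f (ConjAct.toConjAct u) x

theorem aeval_smul_eq_aeval_comp {R A : Type*} [CommSemiring R] [Semiring A] [Algebra R A]
    (c : R) (x : A) (f : R[X]) : aeval (c • x) f = aeval x (f.comp (C c * X)) := by
  simp [aeval_comp, Algebra.smul_def]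

theorem aeval_smul_eq_zero_of_aeval_minpoly_eq_zero {K A B : Type*} [Field K] [Ring A]
    [Algebra K A] [Semiring B] [Algebra K B] {a : A} {b : B} {f : K[X]} (c : K)
    (hb : aeval b (minpoly K a) = 0) (ha : aeval (c • a) f = 0) : aeval (c • b) f = 0 := by
  obtain ⟨g, hg⟩ := minpoly.dvd K a (by rwa [← aeval_smul_eq_aeval_comp])
  rw [aeval_smul_eq_aeval_comp, hg, map_mul, hb, zero_mul]

end Polynomial

namespace FiniteField

theorem eq_one_of_aeval_smul_minpoly_eq_zero {K L : Type*} [Field K] [Fintype K] [Field L]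
    [Finite L] [Algebra K L] {α : L} (hα : orderOf α = Nat.card L - 1) {c : K}
    (hc : aeval (c • α) (minpoly K α) = 0) : c = 1 := by
  set q := Fintype.card K
  have hq : 2 ≤ q := Fintype.one_lt_card
  have hα0 : α ≠ 0 := by
    rintro rfl
    have := Finite.one_lt_card (α := L)
    rw [orderOf_eq_zero_iff'.mpr fun k hk ↦ by simp [zero_pow hk.ne']] at hα
    omega
  obtain ⟨σ, hσ⟩ := minpoly.exists_algEquiv_of_root' (Algebra.IsAlgebraic.isAlgebraic α) hc
  obtain ⟨⟨j, hj⟩, rfl⟩ := (bijective_frobeniusAlgEquivOfAlgebraic_pow K L).2 σ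
  have hqj : 1 ≤ q ^ j := Nat.one_le_pow _ _ (by omega)
  have hcα : algebraMap K L c = α ^ (q ^ j - 1) := by
    have hσα : α ^ (q ^ j - 1) * α = algebraMap K L c * α := by
      rw [← pow_succ, Nat.sub_add_cancel hqj]
      simpa [AlgEquiv.coe_pow, coe_frobeniusAlgEquivOfAlgebraic_iterate,
        Algebra.smul_def] using hσ
    exact (mul_right_cancel₀ hα0 hσα).symm
  have hc0 : c ≠ 0 := by
    rintro rfl
    exact pow_ne_zero _ hα0 (by simpa using hcα.symm)
  have hdvd : orderOf α ∣ (q ^ j - 1) * (q - 1) := by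
    refine orderOf_dvd_of_pow_eq_one ?_
    rw [pow_mul, ← hcα, ← map_pow, pow_card_sub_one_eq_one c hc0, map_one]
  rw [hα, Module.natCard_eq_pow_finrank (K := K), Nat.card_eq_fintype_card] at hdvd
  have hzero := Nat.eq_zero_of_dvd_of_lt hdvd (Nat.pow_sub_one_mul_sub_one_lt hq hj)
  have hj0 : q ^ j - 1 = 0 := by
    rcases Nat.mul_eq_zero.mp hzero with h | h <;> omega
  simpa [hj0] using hcα

end FiniteField

theorem stmt13_general (p n : ℕ) [Fact p.Prime] (hn : 1 ≤ n)
    (α : GaloisField p n) (hα : orderOf α = p ^ n - 1)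
    (m : Polynomial (ZMod p)) (hm : m = minpoly (ZMod p) α)
    (A : Matrix (Fin n) (Fin n) (ZMod p))
    (hminA : minpoly (ZMod p) A = m)
    (γ : (ZMod p)ˣ) (Δ : (Matrix (Fin n) (Fin n) (ZMod p))ˣ)
    (hconj : (Δ : Matrix (Fin n) (Fin n) (ZMod p)) * A * ((↑Δ⁻¹ : Matrix (Fin n) (Fin n) (ZMod p))) = (γ : ZMod p) • A) :
    γ = 1 := by
  subst hm
  have hγA : aeval ((γ : ZMod p) • A) (minpoly (ZMod p) α) = 0 := by
    rw [← hconj, aeval_units_conj, ← hminA, minpoly.aeval, mul_zero, zero_mul]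
  have hαA : aeval α (minpoly (ZMod p) A) = 0 := hminA ▸ minpoly.aeval _ α
  have hprim : orderOf α = Nat.card (GaloisField p n) - 1 := by
    rw [hα, GaloisField.card p n (by omega)]
  exact Units.ext <| FiniteField.eq_one_of_aeval_smul_minpoly_eq_zero hprim <|
    aeval_smul_eq_zero_of_aeval_minpoly_eq_zero _ hαA hγA

/-- Let `p` be a prime, `n ≥ 1`, `F = GF(p)`, `α` a primitive element of
`GF(pⁿ)`, `m` its minimal polynomial over `F`, and `A` the `n × n` companion matrix of `m`
(the matrix whose characteristic and minimal polynomials equal `m`). If `γ ∈ F^*` and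
`Δ ∈ GL(n, F)` satisfy `Δ A Δ⁻¹ = γ A`, then `γ = 1`. -/
theorem stmt13 (p n : ℕ) [Fact p.Prime] (hn : 1 ≤ n)
    (α : GaloisField p n) (hα : orderOf α = p ^ n - 1)
    (m : Polynomial (ZMod p)) (hm : m = minpoly (ZMod p) α)
    (A : Matrix (Fin n) (Fin n) (ZMod p))
    (hchar : A.charpoly = m) (hminA : minpoly (ZMod p) A = m)
    (γ : (ZMod p)ˣ) (Δ : (Matrix (Fin n) (Fin n) (ZMod p))ˣ)
    (hconj : (Δ : Matrix (Fin n) (Fin n) (ZMod p)) * A * ((↑Δ⁻¹ : Matrix (Fin n) (Fin n) (ZMod p))) = (γ : ZMod p) • A) :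
    γ = 1 :=
  stmt13_general p n hn α hα m hm A hminA γ Δ hconj
end
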